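/- arXiv:2412.16180 — 3 statements merged into one kernel-verified Lean document; each statement's English description precedes it below -/
import Mathlib

section
/- Let X ⊆ ℝ^n, X̂ ⊆ X, let S̃ : X × X̂ → ℝ≥0, α̃ ∈ K∞, σ̃ ∈ (0,1), ρ̃_u ∈ K∞ ∪ {0}, ε̃ ≥ 0, and suppose α̃(‖x − x̂‖) ≤ S̃(x, x̂) for all x ∈ X, x̂ ∈ X̂. Let x : ℕ → X and x̂ : ℕ → X̂ be sequences and u_max ≥ 0 a constant such that for every k ∈ ℕ, S̃(x(k+1), x̂(k+1)) ≤ max{ σ̃·S̃(x(k), x̂(k)), ρ̃_u(u_max), ε̃ }. Then for every k ∈ ℕ, ‖x(k) − x̂(k)‖ ≤ α̃⁻¹( max{ σ̃ᵏ·S̃(x(0), x̂(0)), ρ̃_u(u_max), ε̃ } ); in particular the distance between the two runs is uniformly bounded by α̃⁻¹( max{ S̃(x(0), x̂(0)), ρ̃_u(u_max), ε̃ } ). -/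
/-! Contracting by `σ̃ ≤ 1` at each step, the recursion unrolls to
`S̃(x k, x̂ k) ≤ max (σ̃ᵏ S̃(x 0, x̂ 0)) (max ρ̃_u(u_max) ε̃)`; composing with the lower
bound `α̃(‖x − x̂‖) ≤ S̃` and the monotone inverse of the bijection `α̃` gives both bounds. -/

open scoped NNReal

/-- A class `K∞` function: continuous, strictly increasing, zero at zero, and
unbounded (tending to infinity).  Such a function is a bijection of `ℝ≥0`, and its
inverse is realized below by `Function.invFun`. -/
def IsKInfty (α : ℝ≥0 → ℝ≥0) : Prop :=
  Continuous α ∧ StrictMono α ∧ α 0 = 0 ∧ Filter.Tendsto α Filter.atTop Filter.atTop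

theorem IsKInfty.surjective {α : ℝ≥0 → ℝ≥0} (h : IsKInfty α) : Function.Surjective α := by
  obtain ⟨hcont, -, hzero, htop⟩ := h
  intro y
  obtain ⟨R, hR⟩ := (Filter.tendsto_atTop.1 htop y).exists
  have hy : y ∈ Set.Icc (α 0) (α R) := ⟨by rw [hzero]; exact zero_le, hR⟩
  obtain ⟨r, -, hr⟩ := intermediate_value_Icc zero_le hcont.continuousOn hy
  exact ⟨r, hr⟩

theorem IsKInfty.le_invFun {α : ℝ≥0 → ℝ≥0} (h : IsKInfty α) {a y : ℝ≥0} (hay : α a ≤ y) :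
    a ≤ Function.invFun α y :=
  h.2.1.le_iff_le.1 (by rwa [Function.invFun_eq (h.surjective y)])

theorem le_max_pow_mul_of_forall_succ_le_max_mul {R : Type*} [Semiring R] [LinearOrder R]
    [IsOrderedRing R] {s : ℕ → R} {σ c : R} (hσ0 : 0 ≤ σ) (hσ1 : σ ≤ 1) (hc : 0 ≤ c)
    (hs : ∀ k, s (k + 1) ≤ max (σ * s k) c) (k : ℕ) :
    s k ≤ max (σ ^ k * s 0) c := by
  induction k with
  | zero => simp
  | succ k ih =>
    calc s (k + 1) ≤ max (σ * s k) c := hs k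
      _ ≤ max (σ * max (σ ^ k * s 0) c) c := by gcongr
      _ = max (σ ^ (k + 1) * s 0) (max (σ * c) c) := by
        rw [mul_max_of_nonneg _ _ hσ0, ← mul_assoc, ← pow_succ', max_assoc]
      _ = max (σ ^ (k + 1) * s 0) c := by
        rw [max_eq_right (mul_le_of_le_one_left hc hσ1)]

theorem stmt_5_general {n : ℕ} (X Xh : Set (Fin n → ℝ))
    (St : (Fin n → ℝ) → (Fin n → ℝ) → ℝ≥0)
    (αt : ℝ≥0 → ℝ≥0) (hαt : IsKInfty αt)
    (σt : ℝ≥0) (hσt1 : σt < 1)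
    (ρut : ℝ≥0 → ℝ≥0)
    (εt : ℝ≥0)
    (hlow : ∀ x ∈ X, ∀ xh ∈ Xh, αt ‖x - xh‖₊ ≤ St x xh)
    (x xh : ℕ → Fin n → ℝ) (hx : ∀ k, x k ∈ X) (hxh : ∀ k, xh k ∈ Xh)
    (umax : ℝ≥0)
    (hrec : ∀ k : ℕ,
      St (x (k + 1)) (xh (k + 1)) ≤ max (max (σt * St (x k) (xh k)) (ρut umax)) εt) :
    (∀ k : ℕ, ‖x k - xh k‖₊ ≤
        Function.invFun αt (max (max (σt ^ k * St (x 0) (xh 0)) (ρut umax)) εt)) ∧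
    (∀ k : ℕ, ‖x k - xh k‖₊ ≤
        Function.invFun αt (max (max (St (x 0) (xh 0)) (ρut umax)) εt)) := by
  have hdecay (k : ℕ) :
      St (x k) (xh k) ≤ max (σt ^ k * St (x 0) (xh 0)) (max (ρut umax) εt) :=
    le_max_pow_mul_of_forall_succ_le_max_mul (s := fun k => St (x k) (xh k)) zero_le hσt1.le
      zero_le (fun k => by simpa only [max_assoc] using hrec k) k
  have hα (k : ℕ) :
      αt ‖x k - xh k‖₊ ≤ max (max (σt ^ k * St (x 0) (xh 0)) (ρut umax)) εt := by
    rw [max_assoc]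
    exact (hlow _ (hx k) _ (hxh k)).trans (hdecay k)
  refine ⟨fun k => hαt.le_invFun (hα k), fun k => hαt.le_invFun ((hα k).trans ?_)⟩
  gcongr
  exact mul_le_of_le_one_left zero_le (pow_le_one₀ zero_le hσt1.le)

/-- uniform distance bound between matched runs.  Suppose
`α̃(‖x − x̂‖) ≤ S̃(x,x̂)` on `X × X̂` with `α̃ ∈ K∞`, and the runs satisfy
`S̃(x(k+1),x̂(k+1)) ≤ max {σ̃·S̃(x(k),x̂(k)), ρ̃_u(u_max), ε̃}`.  Then
`‖x(k) − x̂(k)‖ ≤ α̃⁻¹(max {σ̃ᵏ·S̃(x(0),x̂(0)), ρ̃_u(u_max), ε̃})` for every `k`;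
in particular the distance is uniformly bounded by
`α̃⁻¹(max {S̃(x(0),x̂(0)), ρ̃_u(u_max), ε̃})`. -/
theorem stmt_5 {n : ℕ} (X Xh : Set (Fin n → ℝ)) (hXh : Xh ⊆ X)
    (St : (Fin n → ℝ) → (Fin n → ℝ) → ℝ≥0)
    (αt : ℝ≥0 → ℝ≥0) (hαt : IsKInfty αt)
    (σt : ℝ≥0) (hσt0 : 0 < σt) (hσt1 : σt < 1)
    (ρut : ℝ≥0 → ℝ≥0) (hρut : IsKInfty ρut ∨ ρut = 0)
    (εt : ℝ≥0)
    (hlow : ∀ x ∈ X, ∀ xh ∈ Xh, αt ‖x - xh‖₊ ≤ St x xh)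
    (x xh : ℕ → Fin n → ℝ) (hx : ∀ k, x k ∈ X) (hxh : ∀ k, xh k ∈ Xh)
    (umax : ℝ≥0)
    (hrec : ∀ k : ℕ,
      St (x (k + 1)) (xh (k + 1)) ≤ max (max (σt * St (x k) (xh k)) (ρut umax)) εt) :
    (∀ k : ℕ, ‖x k - xh k‖₊ ≤
        Function.invFun αt (max (max (σt ^ k * St (x 0) (xh 0)) (ρut umax)) εt)) ∧
    (∀ k : ℕ, ‖x k - xh k‖₊ ≤
        Function.invFun αt (max (max (St (x 0) (xh 0)) (ρut umax)) εt)) :=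
  stmt_5_general X Xh St αt hαt σt hσt1 ρut εt hlow x xh hx hxh umax hrec
end

section
/- Let τ > 0, κ_c ≤ 0, 0 < κ_d < 1, and integers 1 ≤ z̲ ≤ z̄ with ln(κ_d) − κ_c·τ·z̄ < 0. Then there exist δ > z̄ and σ ∈ (0,1) such that (i) e^{−κ_c τ} · κ_d^{1/δ} ≤ σ, and (ii) κ_d^{1 − c/δ} ≤ σ for every integer c with z̲ ≤ c ≤ z̄. -/
/-! Condition (i) reads `-κc τ δ + log κd < 0`; it holds at `δ = z̄` by the dwell-time hypothesis,
hence, by continuity, at some `δ > z̄`. Every exponent `1 - c / δ` in (ii) is then positive, so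
`κd ^ (1 - c / δ) ≤ κd ^ (1 - z̄ / δ) < 1`, and `σ` is the larger of the two bounds. -/

theorem ContinuousAt.exists_gt_of_lt {α β : Type*} [TopologicalSpace α] [LinearOrder α]
    [DenselyOrdered α] [NoMaxOrder α] [OrderTopology α] [TopologicalSpace β] [LinearOrder β]
    [OrderClosedTopology β] {f : α → β} {x : α} {c : β} (hf : ContinuousAt f x) (h : f x < c) :
    ∃ y, x < y ∧ f y < c :=
  ((eventually_mem_nhdsWithin (s := Set.Ioi x)).and
    ((hf.eventually (Iio_mem_nhds h)).filter_mono nhdsWithin_le_nhds)).exists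

theorem Real.exp_mul_rpow_one_div_lt_one {a b δ : ℝ} (hb : 0 < b) (hδ : 0 < δ)
    (h : a * δ + Real.log b < 0) : Real.exp a * b ^ (1 / δ) < 1 := by
  rw [Real.rpow_def_of_pos hb, ← Real.exp_add, Real.exp_lt_one_iff]
  have : (a * δ + Real.log b) / δ < 0 := div_neg_of_neg_of_pos h hδ
  rwa [add_div, mul_div_cancel_right₀ _ hδ.ne', ← mul_one_div] at this

theorem stmt_7_general (τ κc κd : ℝ) (hκd0 : 0 < κd) (hκd1 : κd < 1)
    (zl zu : ℕ)
    (hdwell : Real.log κd - κc * τ * (zu : ℝ) < 0) :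
    ∃ δ σ : ℝ, (zu : ℝ) < δ ∧ σ ∈ Set.Ioo (0 : ℝ) 1 ∧
      Real.exp (-(κc * τ)) * κd ^ ((1 : ℝ) / δ) ≤ σ ∧
      ∀ c : ℕ, zl ≤ c → c ≤ zu → κd ^ (1 - (c : ℝ) / δ) ≤ σ := by
  obtain ⟨δ, hzuδ, hflow⟩ : ∃ δ, (zu : ℝ) < δ ∧ -(κc * τ) * δ + Real.log κd < 0 :=
    ContinuousAt.exists_gt_of_lt (f := fun δ => -(κc * τ) * δ + Real.log κd) (by fun_prop)
      (by linarith)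
  have hδ : 0 < δ := (Nat.cast_nonneg zu).trans_lt hzuδ
  refine ⟨δ, max (Real.exp (-(κc * τ)) * κd ^ ((1 : ℝ) / δ)) (κd ^ (1 - (zu : ℝ) / δ)), hzuδ,
    ⟨lt_max_of_lt_left (by positivity), max_lt ?_ ?_⟩, le_max_left _ _, fun c _ hc => ?_⟩
  · exact Real.exp_mul_rpow_one_div_lt_one hκd0 hδ hflow
  · exact Real.rpow_lt_one hκd0.le hκd1 (by rw [sub_pos, div_lt_one hδ]; exact hzuδ)
  · refine (Real.rpow_le_rpow_of_exponent_ge hκd0 hκd1.le ?_).trans (le_max_right _ _)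
    gcongr

/-- dwell-time arithmetic for the case `κ_d < 1`, `κ_c ≤ 0`.
If `τ > 0`, `κ_c ≤ 0`, `0 < κ_d < 1`, `1 ≤ z̲ ≤ z̄` and `ln(κ_d) − κ_c·τ·z̄ < 0`, then
there exist `δ > z̄` and `σ ∈ (0,1)` such that `e^{−κ_c τ} · κ_d^{1/δ} ≤ σ` and
`κ_d^{1 − c/δ} ≤ σ` for every integer `z̲ ≤ c ≤ z̄` (real powers). -/
theorem stmt_7 (τ κc κd : ℝ) (hτ : 0 < τ) (hκc : κc ≤ 0) (hκd0 : 0 < κd) (hκd1 : κd < 1)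
    (zl zu : ℕ) (hzl : 1 ≤ zl) (hzz : zl ≤ zu)
    (hdwell : Real.log κd - κc * τ * (zu : ℝ) < 0) :
    ∃ δ σ : ℝ, (zu : ℝ) < δ ∧ σ ∈ Set.Ioo (0 : ℝ) 1 ∧
      Real.exp (-(κc * τ)) * κd ^ ((1 : ℝ) / δ) ≤ σ ∧
      ∀ c : ℕ, zl ≤ c → c ≤ zu → κd ^ (1 - (c : ℝ) / δ) ≤ σ :=
  stmt_7_general τ κc κd hκd0 hκd1 zl zu hdwell
end

section
/- Let τ > 0, κ_c ∈ ℝ, let D_c be a symmetric (q+n)×(q+n) matrix, ρ_{u_c} ∈ K∞, and let V : ℝ^n × ℝ^n → ℝ≥0 be continuously differentiable and satisfy: for all x, x̂ ∈ ℝ^n, ω, ω̂ ∈ ℝ^q, u, û ∈ ℝ^m, ∂V/∂x(x,x̂)·f(x,ω,u) + ∂V/∂x̂(x,x̂)·f(x̂,ω̂,û) ≤ −κ_c·V(x,x̂) + [ω−ω̂; x−x̂]ᵀ D_c [ω−ω̂; x−x̂] + ρ_{u_c}(‖u−û‖). Let ξ, ξ̂ : [0,τ] → ℝ^n be continuous curves,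 ω : [0,τ] → ℝ^q, and ω̂ ∈ ℝ^q, u, û ∈ ℝ^m constants, such that ξ has derivative f(ξ(t), ω(t), u) and ξ̂ has derivative f(ξ̂(t), ω̂, û) at every t ∈ [0,τ]. Suppose there exists R ≥ 0 such that [ω(t)−ω̂; ξ(t)−ξ̂(t)]ᵀ D_c [ω(t)−ω̂; ξ(t)−ξ̂(t)] + ρ_{u_c}(‖u−û‖) ≤ R for all t ∈ [0,τ]. Then V(ξ(τ), ξ̂(τ)) ≤ e^{−κ_c τ}·V(ξ(0), ξ̂(0)) + R·∫₀^τ e^{−κ_c (τ−s)} ds. -/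
open scoped NNReal
open Matrix

/-!
Along the pair of trajectories, `g t = V (ξ t, ξ̂ t)` satisfies the scalar differential inequality
`g' ≤ -κ_c g + R`, by the dissipation inequality and the bound on the supply term. For such a
`g`, the integrating factor makes `t ↦ e^{-κ (b - t)} g t + R ∫ₜᵇ e^{-κ (b - s)} ds` antitone,
and comparing its values at the endpoints is the estimate.
-/

open Set

theorem le_exp_mul_add_integral_of_deriv_le {g g' : ℝ → ℝ} {a b κ R : ℝ} (hab : a ≤ b)
    (hg : ContinuousOn g (Icc a b)) (hg' : ∀ t ∈ Ioo a b, HasDerivAt g (g' t) t)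
    (hbound : ∀ t ∈ Ioo a b, g' t ≤ -κ * g t + R) :
    g b ≤ Real.exp (-κ * (b - a)) * g a + R * ∫ s in a..b, Real.exp (-κ * (b - s)) := by
  set e : ℝ → ℝ := fun s => Real.exp (-κ * (b - s)) with he_def
  have he_cont : Continuous e := by fun_prop
  have he : ∀ t, HasDerivAt e (κ * e t) t := fun t => by
    convert (((hasDerivAt_id t).const_sub b).const_mul (-κ)).exp using 1
    · rfl
    · simp only [he_def, id]
      ring
  have hI : ∀ t, HasDerivAt (fun t => ∫ s in t..b, e s) (-e t) t := fun t =>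
    intervalIntegral.integral_hasDerivAt_left (he_cont.intervalIntegrable t b)
      he_cont.aestronglyMeasurable.stronglyMeasurableAtFilter he_cont.continuousAt
  set ψ : ℝ → ℝ := fun t => e t * g t + R * ∫ s in t..b, e s
  have hψ : ∀ t ∈ Ioo a b, HasDerivAt ψ (e t * (g' t + κ * g t - R)) t := fun t ht =>
    (((he t).mul (hg' t ht)).add ((hI t).const_mul R)).congr_deriv (by ring)
  have hψ_anti : AntitoneOn ψ (Icc a b) := by
    refine antitoneOn_of_hasDerivWithinAt_nonpos (f' := fun t => e t * (g' t + κ * g t - R))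
      (convex_Icc a b) ?_ ?_ ?_
    · have hI_cont : Continuous fun t => ∫ s in t..b, e s :=
        continuous_iff_continuousAt.2 fun t => (hI t).continuousAt
      exact (he_cont.continuousOn.mul hg).add (continuous_const.mul hI_cont).continuousOn
    · rw [interior_Icc]
      exact fun t ht => (hψ t ht).hasDerivWithinAt
    · rw [interior_Icc]
      intro t ht
      exact mul_nonpos_of_nonneg_of_nonpos (Real.exp_pos _).le (by linarith [hbound t ht])
  have := hψ_anti (left_mem_Icc.2 hab) (right_mem_Icc.2 hab) hab
  simpa [ψ, e] using this

theorem stmt_8_general {n q m : ℕ} (τ : ℝ) (hτ : 0 < τ) (κc : ℝ)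
    (Dc : Matrix (Fin q ⊕ Fin n) (Fin q ⊕ Fin n) ℝ)
    (ρuc : ℝ≥0 → ℝ≥0)
    (f : (Fin n → ℝ) → (Fin q → ℝ) → (Fin m → ℝ) → (Fin n → ℝ))
    (V : (Fin n → ℝ) × (Fin n → ℝ) → ℝ)
    (hV1 : ContDiff ℝ 1 V)
    (hdiss : ∀ (x xh : Fin n → ℝ) (ω ωh : Fin q → ℝ) (u uh : Fin m → ℝ),
      fderiv ℝ V (x, xh) (f x ω u, f xh ωh uh) ≤
        -κc * V (x, xh)
        + Sum.elim (ω - ωh) (x - xh) ⬝ᵥ Dc.mulVec (Sum.elim (ω - ωh) (x - xh))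
        + (ρuc ‖u - uh‖₊ : ℝ))
    (ξ ξh : ℝ → Fin n → ℝ) (ω : ℝ → Fin q → ℝ) (ωh : Fin q → ℝ) (u uh : Fin m → ℝ)
    (hξc : ContinuousOn ξ (Set.Icc 0 τ)) (hξhc : ContinuousOn ξh (Set.Icc 0 τ))
    (hξ : ∀ t ∈ Set.Icc (0 : ℝ) τ, HasDerivAt ξ (f (ξ t) (ω t) u) t)
    (hξh : ∀ t ∈ Set.Icc (0 : ℝ) τ, HasDerivAt ξh (f (ξh t) ωh uh) t)
    (R : ℝ)
    (hquad : ∀ t ∈ Set.Icc (0 : ℝ) τ,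
      Sum.elim (ω t - ωh) (ξ t - ξh t) ⬝ᵥ Dc.mulVec (Sum.elim (ω t - ωh) (ξ t - ξh t))
        + (ρuc ‖u - uh‖₊ : ℝ) ≤ R) :
    V (ξ τ, ξh τ) ≤ Real.exp (-κc * τ) * V (ξ 0, ξh 0)
      + R * ∫ s in (0 : ℝ)..τ, Real.exp (-κc * (τ - s)) := by
  have hV : Differentiable ℝ V := hV1.differentiable one_ne_zero
  have hg : ContinuousOn (fun t => V (ξ t, ξh t)) (Icc 0 τ) :=
    hV.continuous.comp_continuousOn (hξc.prodMk hξhc)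
  have hg' : ∀ t ∈ Ioo 0 τ, HasDerivAt (fun t => V (ξ t, ξh t))
      (fderiv ℝ V (ξ t, ξh t) (f (ξ t) (ω t) u, f (ξh t) ωh uh)) t := fun t ht =>
    (hV _).hasFDerivAt.comp_hasDerivAt t
      ((hξ t (Ioo_subset_Icc_self ht)).prodMk (hξh t (Ioo_subset_Icc_self ht)))
  have hbound : ∀ t ∈ Ioo 0 τ, fderiv ℝ V (ξ t, ξh t) (f (ξ t) (ω t) u, f (ξh t) ωh uh)
      ≤ -κc * V (ξ t, ξh t) + R := fun t ht => by
    linarith [hdiss (ξ t) (ξh t) (ω t) ωh u uh, hquad t (Ioo_subset_Icc_self ht)]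
  simpa using le_exp_mul_add_integral_of_deriv_le hτ.le hg hg' hbound

/-- Grönwall-type one-sampling-period estimate along pairs of flow
trajectories of `ẋ = f(x,ω,u)`.  If the C¹ function `V ≥ 0` satisfies the
dissipativity-type decrease condition and the quadratic supply term is bounded by `R`
along the two trajectories on `[0,τ]`, then
`V(ξ(τ),ξ̂(τ)) ≤ e^{−κ_c τ} V(ξ(0),ξ̂(0)) + R ∫₀^τ e^{−κ_c (τ−s)} ds`. -/
theorem stmt_8 {n q m : ℕ} (τ : ℝ) (hτ : 0 < τ) (κc : ℝ)
    (Dc : Matrix (Fin q ⊕ Fin n) (Fin q ⊕ Fin n) ℝ) (hDc : Dc.IsSymm)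
    (ρuc : ℝ≥0 → ℝ≥0) (hρuc : IsKInfty ρuc)
    (f : (Fin n → ℝ) → (Fin q → ℝ) → (Fin m → ℝ) → (Fin n → ℝ))
    (V : (Fin n → ℝ) × (Fin n → ℝ) → ℝ)
    (hV0 : ∀ p, 0 ≤ V p) (hV1 : ContDiff ℝ 1 V)
    (hdiss : ∀ (x xh : Fin n → ℝ) (ω ωh : Fin q → ℝ) (u uh : Fin m → ℝ),
      fderiv ℝ V (x, xh) (f x ω u, f xh ωh uh) ≤
        -κc * V (x, xh)
        + Sum.elim (ω - ωh) (x - xh) ⬝ᵥ Dc.mulVec (Sum.elim (ω - ωh) (x - xh))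
        + (ρuc ‖u - uh‖₊ : ℝ))
    (ξ ξh : ℝ → Fin n → ℝ) (ω : ℝ → Fin q → ℝ) (ωh : Fin q → ℝ) (u uh : Fin m → ℝ)
    (hξc : ContinuousOn ξ (Set.Icc 0 τ)) (hξhc : ContinuousOn ξh (Set.Icc 0 τ))
    (hξ : ∀ t ∈ Set.Icc (0 : ℝ) τ, HasDerivAt ξ (f (ξ t) (ω t) u) t)
    (hξh : ∀ t ∈ Set.Icc (0 : ℝ) τ, HasDerivAt ξh (f (ξh t) ωh uh) t)
    (R : ℝ) (hR : 0 ≤ R)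
    (hquad : ∀ t ∈ Set.Icc (0 : ℝ) τ,
      Sum.elim (ω t - ωh) (ξ t - ξh t) ⬝ᵥ Dc.mulVec (Sum.elim (ω t - ωh) (ξ t - ξh t))
        + (ρuc ‖u - uh‖₊ : ℝ) ≤ R) :
    V (ξ τ, ξh τ) ≤ Real.exp (-κc * τ) * V (ξ 0, ξh 0)
      + R * ∫ s in (0 : ℝ)..τ, Real.exp (-κc * (τ - s)) :=
  stmt_8_general τ hτ κc Dc ρuc f V hV1 hdiss ξ ξh ω ωh u uh hξc hξhc hξ hξh R hquad
end
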